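/- arXiv:1203.0919 — 3 statements merged into one kernel-verified Lean document; each statement's English description precedes it below -/
import Mathlib

section
/- Let Ω be a measurable space, 𝒜 a finite partition of Ω into nonempty measurable sets, P a probability measure on Ω, f : Ω → ℝ a bounded measurable function, f̂ : 𝒜 → ℝ, and P̂ a probability mass function on 𝒜. If 0 < ε < 1/2, δ ≥ 0, f ∼_ε f̂ and P ∼_δ P̂, then |∫_Ω f dP − ∑_{A∈𝒜} f̂(A)·P̂(A)| ≤ (max_{A∈𝒜} f̂(A) − min_{A∈𝒜} f̂(A))·(ε/(1−2ε) + δ). -/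
/-! Write `∫ f dP - ∑ f̂ P̂` as `(∫ f dP - ∑ f̂(A) P(A)) + ∑ f̂(A) (P(A) - P̂(A))`. The first
term is at most `(sup f - inf f) ε`, since `f` stays within that distance of `f̂(A)` on each cell
`A`. The second is at most `(max f̂ - min f̂) δ`: because `P` and `P̂` both have total mass one,
`f̂` may be replaced by `f̂ - min f̂`. Finally `f ∼_ε f̂` gives
`sup f - inf f ≤ max f̂ - min f̂ + 2 (sup f - inf f) ε`, that is
`(sup f - inf f) ε ≤ (max f̂ - min f̂) ε / (1 - 2ε)`. -/

open MeasureTheory Finset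

theorem abs_sum_mul_sub_sum_mul_le {ι : Type*} {s : Finset ι} (hs : s.Nonempty)
    (g p q : ι → ℝ) (hpq : ∑ i ∈ s, p i = ∑ i ∈ s, q i) :
    |∑ i ∈ s, g i * p i - ∑ i ∈ s, g i * q i| ≤
      (s.sup' hs g - s.inf' hs g) * ∑ i ∈ s, |p i - q i| := by
  set c := s.inf' hs g
  have hshift : ∑ i ∈ s, g i * p i - ∑ i ∈ s, g i * q i =
      ∑ i ∈ s, (g i - c) * (p i - q i) := by
    simp only [sub_mul, mul_sub, sum_sub_distrib, ← mul_sum, hpq]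
    ring
  rw [hshift, mul_sum]
  refine (abs_sum_le_sum_abs _ _).trans (sum_le_sum fun i hi => ?_)
  rw [abs_mul, abs_of_nonneg (sub_nonneg.2 (inf'_le g hi))]
  gcongr
  exact le_sup' g hi

theorem Measurable.integrable_of_bddAbove_of_bddBelow {Ω : Type*} [MeasurableSpace Ω]
    {μ : Measure Ω} [IsFiniteMeasure μ] {f : Ω → ℝ} (hf : Measurable f)
    (hfa : BddAbove (Set.range f)) (hfb : BddBelow (Set.range f)) : Integrable f μ := by
  obtain ⟨C, hC⟩ := isBounded_iff_forall_norm_le.1 (isBounded_iff_bddBelow_bddAbove.2 ⟨hfb, hfa⟩)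
  exact .of_bound hf.aestronglyMeasurable C (.of_forall fun w => hC _ (Set.mem_range_self w))

theorem sSup_range_sub_sInf_range_le {Ω : Type*} [Nonempty Ω] {𝒜 : Finset (Set Ω)}
    (h𝒜 : 𝒜.Nonempty) (hcover : ⋃ A ∈ 𝒜, A = Set.univ) {f : Ω → ℝ} {g : Set Ω → ℝ} {η : ℝ}
    (hfg : ∀ A ∈ 𝒜, ∀ w ∈ A, |f w - g A| ≤ η) :
    sSup (Set.range f) - sInf (Set.range f) ≤ 𝒜.sup' h𝒜 g - 𝒜.inf' h𝒜 g + 2 * η := by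
  have hmem : ∀ w, ∃ A ∈ 𝒜, w ∈ A := fun w => by
    simpa using (hcover.symm ▸ Set.mem_univ w : w ∈ ⋃ A ∈ 𝒜, A)
  have hsup : sSup (Set.range f) ≤ 𝒜.sup' h𝒜 g + η := by
    refine csSup_le (Set.range_nonempty f) ?_
    rintro _ ⟨w, rfl⟩
    obtain ⟨A, hA, hw⟩ := hmem w
    linarith [(abs_le.1 (hfg A hA w hw)).2, le_sup' g hA]
  have hinf : 𝒜.inf' h𝒜 g - η ≤ sInf (Set.range f) := by
    refine le_csInf (Set.range_nonempty f) ?_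
    rintro _ ⟨w, rfl⟩
    obtain ⟨A, hA, hw⟩ := hmem w
    linarith [(abs_le.1 (hfg A hA w hw)).1, inf'_le g hA]
  linarith

section Partition

variable {Ω : Type*} [MeasurableSpace Ω] {𝒜 : Finset (Set Ω)}
  (hmeas : ∀ A ∈ 𝒜, MeasurableSet A) (hdisj : (𝒜 : Set (Set Ω)).PairwiseDisjoint id)
  (hcover : ⋃ A ∈ 𝒜, A = Set.univ)
include hmeas hdisj hcover

theorem sum_measureReal_eq_measureReal_univ (μ : Measure Ω) [IsFiniteMeasure μ] :
    ∑ A ∈ 𝒜, μ.real A = μ.real Set.univ := by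
  rw [← hcover]
  exact (measureReal_biUnion_finset hdisj hmeas).symm

theorem abs_integral_sub_sum_le {μ : Measure Ω} [IsFiniteMeasure μ] {f : Ω → ℝ}
    (hf : Integrable f μ) {g : Set Ω → ℝ} {η : ℝ}
    (hfg : ∀ A ∈ 𝒜, ∀ w ∈ A, |f w - g A| ≤ η) :
    |∫ w, f w ∂μ - ∑ A ∈ 𝒜, g A * μ.real A| ≤ η * μ.real Set.univ := by
  have hsplit : ∫ w, f w ∂μ = ∑ A ∈ 𝒜, ∫ w in A, f w ∂μ := by
    rw [← setIntegral_univ, ← hcover]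
    exact integral_biUnion_finset 𝒜 hmeas hdisj fun A _ => hf.integrableOn
  have hcell : ∀ A ∈ 𝒜, |∫ w in A, f w ∂μ - g A * μ.real A| ≤ η * μ.real A := by
    intro A hA
    have hconst : ∫ w in A, f w ∂μ - g A * μ.real A = ∫ w in A, (f w - g A) ∂μ := by
      rw [integral_sub hf.integrableOn (integrableOn_const (measure_ne_top μ A)),
        setIntegral_const, smul_eq_mul, mul_comm]
    rw [hconst, ← Real.norm_eq_abs]
    exact norm_setIntegral_le_of_norm_le_const (measure_lt_top μ A)
      fun w hw => (Real.norm_eq_abs _).trans_le (hfg A hA w hw)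
  calc |∫ w, f w ∂μ - ∑ A ∈ 𝒜, g A * μ.real A|
      ≤ ∑ A ∈ 𝒜, |∫ w in A, f w ∂μ - g A * μ.real A| := by
        rw [hsplit, ← sum_sub_distrib]
        exact abs_sum_le_sum_abs _ _
    _ ≤ ∑ A ∈ 𝒜, η * μ.real A := sum_le_sum hcell
    _ = η * μ.real Set.univ := by
        rw [← mul_sum, sum_measureReal_eq_measureReal_univ hmeas hdisj hcover]

end Partition

theorem stmt_5_general {Ω : Type*} [MeasurableSpace Ω]
    (𝒜 : Finset (Set Ω)) (h𝒜 : 𝒜.Nonempty)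
    (hmeas : ∀ A ∈ 𝒜, MeasurableSet A)
    (hdisj : ∀ A ∈ 𝒜, ∀ B ∈ 𝒜, A ≠ B → Disjoint A B)
    (hcover : (⋃ A ∈ 𝒜, A) = Set.univ)
    (P : Measure Ω) [IsProbabilityMeasure P]
    (f : Ω → ℝ) (hf : Measurable f)
    (hfa : BddAbove (Set.range f)) (hfb : BddBelow (Set.range f))
    (fhat : Set Ω → ℝ) (Phat : Set Ω → ℝ)
    (hPhat1 : ∑ A ∈ 𝒜, Phat A = 1)
    (ε δ : ℝ) (hε0 : 0 < ε) (hε2 : ε < 1 / 2)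
    (hfsim : ∀ A ∈ 𝒜, ∀ w ∈ A,
      |f w - fhat A| ≤ (sSup (Set.range f) - sInf (Set.range f)) * ε)
    (hPsim : ∑ A ∈ 𝒜, |(P A).toReal - Phat A| ≤ δ) :
    |(∫ w, f w ∂P) - ∑ A ∈ 𝒜, fhat A * Phat A| ≤
      (𝒜.sup' h𝒜 fhat - 𝒜.inf' h𝒜 fhat) * (ε / (1 - 2 * ε) + δ) := by
  have : Nonempty Ω := nonempty_of_isProbabilityMeasure P
  set R := sSup (Set.range f) - sInf (Set.range f)
  set S := 𝒜.sup' h𝒜 fhat - 𝒜.inf' h𝒜 fhat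
  have hdisj' : (𝒜 : Set (Set Ω)).PairwiseDisjoint id := fun A hA B hB => hdisj A hA B hB
  have hPsum : ∑ A ∈ 𝒜, P.real A = 1 := by
    rw [sum_measureReal_eq_measureReal_univ hmeas hdisj' hcover, probReal_univ]
  have hR0 : 0 ≤ R := sub_nonneg.2 <| csInf_le_csSup (Set.range_nonempty f) hfb hfa
  have h1 : 0 < 1 - 2 * ε := by linarith
  have hRS : R * (1 - 2 * ε) ≤ S := by
    linarith [sSup_range_sub_sInf_range_le h𝒜 hcover hfsim]
  have hRε : R * ε ≤ S * (ε / (1 - 2 * ε)) := by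
    rw [mul_div_assoc', le_div_iff₀ h1]
    linarith [mul_le_mul_of_nonneg_right hRS hε0.le]
  have hS0 : 0 ≤ S := (mul_nonneg hR0 h1.le).trans hRS
  have hcells : |∫ w, f w ∂P - ∑ A ∈ 𝒜, fhat A * P.real A| ≤ R * ε := by
    simpa using abs_integral_sub_sum_le (μ := P) hmeas hdisj' hcover
      (hf.integrable_of_bddAbove_of_bddBelow hfa hfb) hfsim
  have hmass : |∑ A ∈ 𝒜, fhat A * P.real A - ∑ A ∈ 𝒜, fhat A * Phat A| ≤ S * δ :=
    (abs_sum_mul_sub_sum_mul_le h𝒜 fhat _ _ (hPsum.trans hPhat1.symm)).trans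
      (mul_le_mul_of_nonneg_left hPsim hS0)
  calc |∫ w, f w ∂P - ∑ A ∈ 𝒜, fhat A * Phat A|
      ≤ R * ε + S * δ := (abs_sub_le _ _ _).trans (add_le_add hcells hmass)
    _ ≤ S * (ε / (1 - 2 * ε) + δ) := by linarith

/-- Second bound of Lemma 3: if `f ∼_ε f̂` (with `0 < ε < 1/2`) and `P ∼_δ P̂` then
`|E_P(f) − E_P̂(f̂)| ≤ (sup f̂ − inf f̂)(ε/(1−2ε) + δ)`. -/
theorem stmt_5 {Ω : Type*} [MeasurableSpace Ω] [Nonempty Ω]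
    (𝒜 : Finset (Set Ω)) (h𝒜 : 𝒜.Nonempty)
    (hne : ∀ A ∈ 𝒜, A.Nonempty)
    (hmeas : ∀ A ∈ 𝒜, MeasurableSet A)
    (hdisj : ∀ A ∈ 𝒜, ∀ B ∈ 𝒜, A ≠ B → Disjoint A B)
    (hcover : (⋃ A ∈ 𝒜, A) = Set.univ)
    (P : Measure Ω) [IsProbabilityMeasure P]
    (f : Ω → ℝ) (hf : Measurable f)
    (hfa : BddAbove (Set.range f)) (hfb : BddBelow (Set.range f))
    (fhat : Set Ω → ℝ) (Phat : Set Ω → ℝ)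
    (hPhat0 : ∀ A ∈ 𝒜, 0 ≤ Phat A) (hPhat1 : ∑ A ∈ 𝒜, Phat A = 1)
    (ε δ : ℝ) (hε0 : 0 < ε) (hε2 : ε < 1 / 2) (hδ : 0 ≤ δ)
    (hfsim : ∀ A ∈ 𝒜, ∀ w ∈ A,
      |f w - fhat A| ≤ (sSup (Set.range f) - sInf (Set.range f)) * ε)
    (hPsim : ∑ A ∈ 𝒜, |(P A).toReal - Phat A| ≤ δ) :
    |(∫ w, f w ∂P) - ∑ A ∈ 𝒜, fhat A * Phat A| ≤
      (𝒜.sup' h𝒜 fhat - 𝒜.inf' h𝒜 fhat) * (ε / (1 - 2 * ε) + δ) :=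
  stmt_5_general 𝒜 h𝒜 hmeas hdisj hcover P f hf hfa hfb fhat Phat hPhat1 ε δ hε0 hε2 hfsim hPsim
end

section
/- Let Ω be a nonempty finite set, D a finite nonempty set, L : D × Ω → ℝ a loss function with f_d = −L(d,·), and suppose R_D = max_{d∈D}(max_w f_d(w) − min_w f_d(w)) > 0. Let ℳ be a nonempty set of probability vectors on Ω. Then for every ε ≥ 0: opt^ε(Ω,D,closure(ℳ),L) = ⋂_{δ>0} opt^{ε+δ}(Ω,D,ℳ,L), where the closure is taken in ℝ^Ω with the standard topology. -/
/- Write `regret p d = max_e E_p(e) − E_p(d)`, so that `d ∈ opt^ε(ℳ)` iff some `p ∈ ℳ` has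
`regret p d ≤ ε R_D`. The regret is continuous in `p`. If `p ∈ closure ℳ` has regret at most `ε R_D`,
then points of `ℳ` close to `p` have regret below `(ε + δ) R_D` since `R_D > 0`. Conversely, `closure ℳ`
lies in the compact probability simplex, so the regret attains its minimum on it, and that minimum
is at most `(ε + δ) R_D` for every `δ > 0`. -/

/-- Expected utility of decision `d` under probability vector `p`,
for loss `L` (`f_d = -L(d,·)`). -/
def expUtil {Ω D : Type*} [Fintype Ω] (p : Ω → ℝ) (L : D → Ω → ℝ) (d : D) : ℝ :=
  ∑ w, p w * (-L d w)

/-- `R_D = max_{d∈D} (max_w f_d(w) − min_w f_d(w))`. -/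
noncomputable def lossRange {Ω D : Type*} [Fintype Ω] [Nonempty Ω] [Fintype D] [Nonempty D]
    (L : D → Ω → ℝ) : ℝ :=
  Finset.univ.sup' Finset.univ_nonempty
    (fun d : D => Finset.univ.sup' Finset.univ_nonempty (fun w : Ω => -L d w) -
      Finset.univ.inf' Finset.univ_nonempty (fun w : Ω => -L d w))

/-- The set of `ε`-optimal decisions `opt^ε(Ω,D,ℳ,L)`. -/
noncomputable def optSet {Ω D : Type*} [Fintype Ω] [Nonempty Ω] [Fintype D] [Nonempty D]
    (ε : ℝ) (ℳ : Set (Ω → ℝ)) (L : D → Ω → ℝ) : Set D :=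
  {d : D | ∃ p ∈ ℳ, ∀ e : D, expUtil p L e - expUtil p L d ≤ ε * lossRange L}

theorem exists_mem_closure_le_of_forall_lt {X : Type*} [TopologicalSpace X] {M : Set X}
    {h : X → ℝ} (hM : IsCompact (closure M)) (hh : Continuous h) {c : ℝ}
    (hc : ∀ c' > c, ∃ y ∈ M, h y ≤ c') : ∃ x ∈ closure M, h x ≤ c := by
  obtain ⟨y, hy, -⟩ := hc (c + 1) (by linarith)
  obtain ⟨x, hx, hmin⟩ := hM.exists_isMinOn ⟨y, subset_closure hy⟩ hh.continuousOn
  refine ⟨x, hx, le_of_forall_gt_imp_ge_of_dense fun c' hc' => ?_⟩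
  obtain ⟨z, hz, hzc⟩ := hc c' hc'
  exact (hmin (subset_closure hz)).trans hzc

theorem continuous_expUtil {Ω D : Type*} [Fintype Ω] (L : D → Ω → ℝ) (e : D) :
    Continuous fun p : Ω → ℝ => expUtil p L e := by
  unfold expUtil
  fun_prop

section Regret

variable {Ω D : Type*} [Fintype Ω] [Fintype D] [Nonempty D]

noncomputable def regret (p : Ω → ℝ) (L : D → Ω → ℝ) (d : D) : ℝ :=
  Finset.univ.sup' Finset.univ_nonempty fun e => expUtil p L e - expUtil p L d

theorem continuous_regret (L : D → Ω → ℝ) (d : D) : Continuous fun p : Ω → ℝ => regret p L d :=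
  Continuous.finset_sup'_apply _ fun e _ => (continuous_expUtil L e).sub (continuous_expUtil L d)

theorem mem_optSet_iff_exists_regret_le [Nonempty Ω] {ε : ℝ} {ℳ : Set (Ω → ℝ)}
    {L : D → Ω → ℝ} {d : D} : d ∈ optSet ε ℳ L ↔ ∃ p ∈ ℳ, regret p L d ≤ ε * lossRange L := by
  simp [optSet, regret, Finset.sup'_le_iff]

end Regret

theorem stmt_9_general {Ω : Type*} [Fintype Ω] [Nonempty Ω]
    {D : Type*} [Fintype D] [Nonempty D]
    (L : D → Ω → ℝ) (hR : 0 < lossRange L)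
    (ℳ : Set (Ω → ℝ))
    (hℳ : ∀ p ∈ ℳ, (∀ w, 0 ≤ p w) ∧ ∑ w, p w = 1)
    (ε : ℝ) :
    optSet ε (closure ℳ) L = ⋂ (δ : ℝ) (_ : 0 < δ), optSet (ε + δ) ℳ L := by
  ext d
  simp only [Set.mem_iInter, mem_optSet_iff_exists_regret_le]
  constructor
  · rintro ⟨p, hp, hpd⟩ δ hδ
    have hlt : regret p L d < (ε + δ) * lossRange L := by nlinarith
    obtain ⟨q, hq, hqM⟩ := mem_closure_iff.mp hp _
      (isOpen_lt (continuous_regret L d) continuous_const) hlt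
    exact ⟨q, hqM, hq.le⟩
  · intro h
    have hcompact : IsCompact (closure ℳ) :=
      (isCompact_stdSimplex ℝ Ω).closure_of_subset hℳ
    refine exists_mem_closure_le_of_forall_lt hcompact (continuous_regret L d) fun c hc => ?_
    obtain ⟨p, hp, hpd⟩ := h ((c - ε * lossRange L) / lossRange L) (div_pos (by linarith) hR)
    refine ⟨p, hp, hpd.trans_eq ?_⟩
    field_simp
    ring

/-- Lemma 4, Eq. (8): `opt^ε(Ω,D,closure(ℳ),L) = ⋂_{δ>0} opt^{ε+δ}(Ω,D,ℳ,L)`. -/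
theorem stmt_9 {Ω : Type*} [Fintype Ω] [Nonempty Ω]
    {D : Type*} [Fintype D] [Nonempty D]
    (L : D → Ω → ℝ) (hR : 0 < lossRange L)
    (ℳ : Set (Ω → ℝ)) (hℳne : ℳ.Nonempty)
    (hℳ : ∀ p ∈ ℳ, (∀ w, 0 ≤ p w) ∧ ∑ w, p w = 1)
    (ε : ℝ) (hε : 0 ≤ ε) :
    optSet ε (closure ℳ) L = ⋂ (δ : ℝ) (_ : 0 < δ), optSet (ε + δ) ℳ L :=
  stmt_9_general L hR ℳ hℳ ε
end

section
/- Let Ω be a nonempty finite set, 𝒜 a finite partition of Ω into nonempty sets, D a finite nonempty set, L : D × Ω → ℝ with f_d = −L(d,·) and R_D = max_{d∈D}(max_w f_d(w) − min_w f_d(w)) > 0, L̂ : D × 𝒜 → ℝ, ℳ a nonempty set of probability vectors on Ω, and ℳ̂ a nonempty set of probability mass functions on 𝒜. If 0 < ε < 1/2, δ ≥ 0, L ∼_ε L̂, and ext(closure(convexHull(ℳ))) ∼_δ ℳ̂ (where ext denotes the set of extreme points, and convex hull and closure are taken in ℝ^Ω), then for every γ ≥ 0: max^γ(Ω,D,ℳ,L)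 ⊆ ⋂_{η>0} max^{η + γ/(1−2ε) + 2(ε/(1−2ε) + δ)}(𝒜,D,ℳ̂,L̂). -/
/-! For fixed decisions `d, e` the regret `p ↦ E_p(f_e) - E_p(f_d)` is linear, so its minimum over
the compact convex set `closure (convexHull ℳ)` is attained at an extreme point `q`, which `ℳ̂`
matches by some `P̂` up to `δ` in total variation. Replacing `E_q(f)` by `E_{P̂}(f̂)` costs at most
`ε R_D` (from `L ∼_ε L̂`) plus `δ R̂_D` (total variation tested against a function of oscillation
at most `R̂_D`), once for `d` and once for `e`. Finally `L ∼_ε L̂` forces `(1 - 2ε) R_D ≤ R̂_D`,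
which converts the remaining multiples of `R_D` into multiples of `R̂_D`. -/

open Finset

noncomputable def Finset.osc {α : Type*} (s : Finset α) (hs : s.Nonempty) (f : α → ℝ) : ℝ :=
  s.sup' hs f - s.inf' hs f

theorem Finset.osc_nonneg {α : Type*} {s : Finset α} (hs : s.Nonempty) (f : α → ℝ) :
    0 ≤ s.osc hs f :=
  sub_nonneg.2 ((inf'_le f hs.choose_spec).trans (le_sup' f hs.choose_spec))

theorem Finset.abs_sub_inf'_le_osc {α : Type*} {s : Finset α} (hs : s.Nonempty) (f : α → ℝ)
    {a : α} (ha : a ∈ s) : |f a - s.inf' hs f| ≤ s.osc hs f := by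
  rw [abs_of_nonneg (sub_nonneg.2 (inf'_le f ha))]
  exact sub_le_sub_right (le_sup' f ha) _

theorem Finset.abs_sum_mul_sub_sum_mul_le {ι : Type*} (s : Finset ι) {g x y : ι → ℝ} {b c : ℝ}
    (hsum : ∑ i ∈ s, x i = ∑ i ∈ s, y i) (hg : ∀ i ∈ s, |g i - c| ≤ b) :
    |∑ i ∈ s, g i * x i - ∑ i ∈ s, g i * y i| ≤ b * ∑ i ∈ s, |x i - y i| := by
  have hcenter : ∑ i ∈ s, g i * x i - ∑ i ∈ s, g i * y i
      = ∑ i ∈ s, (g i - c) * (x i - y i) := by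
    simp only [sub_mul, mul_sub, sum_sub_distrib, ← mul_sum, hsum]
    ring
  rw [hcenter, mul_sum]
  refine (abs_sum_le_sum_abs _ _).trans (sum_le_sum fun i hi => ?_)
  rw [abs_mul]
  exact mul_le_mul_of_nonneg_right (hg i hi) (abs_nonneg _)

theorem IsCompact.exists_mem_extremePoints_isMaxOn {E : Type*} [AddCommGroup E] [Module ℝ E]
    [TopologicalSpace E] [T2Space E] [IsTopologicalAddGroup E] [ContinuousSMul ℝ E]
    [LocallyConvexSpace ℝ E] {K : Set E} (hK : IsCompact K) (hne : K.Nonempty)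
    (l : StrongDual ℝ E) : ∃ q ∈ K.extremePoints ℝ, IsMaxOn l K q := by
  have hF : IsExposed ℝ K (l.toExposed K) := ContinuousLinearMap.toExposed.isExposed
  obtain ⟨x, hxK, hx⟩ := hK.exists_isMaxOn hne l.continuous.continuousOn
  obtain ⟨q, hq⟩ := (hF.isCompact hK).extremePoints_nonempty ⟨x, hxK, hx⟩
  exact ⟨q, hF.isExtreme.extremePoints_subset_extremePoints hq, (extremePoints_subset hq).2⟩

section Simplex

variable {Ω : Type*} [Fintype Ω] {ℳ : Set (Ω → ℝ)}

theorem closure_convexHull_subset_stdSimplex (hℳ : ℳ ⊆ stdSimplex ℝ Ω) :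
    closure (convexHull ℝ ℳ) ⊆ stdSimplex ℝ Ω :=
  closure_minimal (convexHull_min hℳ (convex_stdSimplex ℝ Ω)) (isClosed_stdSimplex ℝ Ω)

theorem exists_mem_extremePoints_sum_mul_le (hℳ : ℳ ⊆ stdSimplex ℝ Ω) {p : Ω → ℝ} (hp : p ∈ ℳ)
    (g : Ω → ℝ) :
    ∃ q ∈ (closure (convexHull ℝ ℳ)).extremePoints ℝ, ∑ w, q w * g w ≤ ∑ w, p w * g w := by
  have hpK : p ∈ closure (convexHull ℝ ℳ) := subset_closure (subset_convexHull ℝ ℳ hp)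
  have hK := (isCompact_stdSimplex ℝ Ω).of_isClosed_subset isClosed_closure
    (closure_convexHull_subset_stdSimplex hℳ)
  obtain ⟨q, hq, hqmax⟩ := hK.exists_mem_extremePoints_isMaxOn ⟨p, hpK⟩
    (∑ w, (-g w) • ContinuousLinearMap.proj w)
  have hqp := isMaxOn_iff.1 hqmax p hpK
  simp only [_root_.sum_apply, smul_apply, ContinuousLinearMap.proj_apply, smul_eq_mul,
    neg_mul, sum_neg_distrib, neg_le_neg_iff] at hqp
  exact ⟨q, hq, by simpa only [mul_comm] using hqp⟩

end Simplex

section Partition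

variable {Ω : Type*} [Fintype Ω] {𝒜 : Finset (Set Ω)}

theorem Finset.sum_sum_indicator_of_pairwiseDisjoint {M : Type*} [AddCommMonoid M]
    (hdisj : (𝒜 : Set (Set Ω)).PairwiseDisjoint id) (hcover : ⋃ A ∈ 𝒜, A = Set.univ)
    (g : Ω → M) : ∑ A ∈ 𝒜, ∑ w, A.indicator g w = ∑ w, g w := by
  rw [sum_comm]
  refine sum_congr rfl fun w _ => ?_
  have := indicator_biUnion_apply 𝒜 id hdisj (f := g) w
  simp_all

theorem abs_sum_mul_sub_sum_mul_sum_indicator_le {q f : Ω → ℝ} {fhat : Set Ω → ℝ} {a : ℝ}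
    (hdisj : (𝒜 : Set (Set Ω)).PairwiseDisjoint id) (hcover : ⋃ A ∈ 𝒜, A = Set.univ)
    (hq : q ∈ stdSimplex ℝ Ω) (hclose : ∀ A ∈ 𝒜, ∀ w ∈ A, |f w - fhat A| ≤ a) :
    |∑ w, q w * f w - ∑ A ∈ 𝒜, fhat A * ∑ w, A.indicator q w| ≤ a := by
  have hsplit : ∑ w, q w * f w - ∑ A ∈ 𝒜, fhat A * ∑ w, A.indicator q w
      = ∑ A ∈ 𝒜, ∑ w, A.indicator (fun w => q w * (f w - fhat A)) w := by
    rw [← sum_sum_indicator_of_pairwiseDisjoint hdisj hcover, ← sum_sub_distrib]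
    refine sum_congr rfl fun A _ => ?_
    rw [mul_sum, ← sum_sub_distrib]
    refine sum_congr rfl fun w _ => ?_
    by_cases hw : w ∈ A
    · simp only [Set.indicator_of_mem hw]
      ring
    · simp only [Set.indicator_of_notMem hw, mul_zero, sub_self]
  have hbound : ∀ A ∈ 𝒜, ∀ w, |A.indicator (fun w => q w * (f w - fhat A)) w|
      ≤ A.indicator (fun w => q w * a) w := by
    intro A hA w
    by_cases hw : w ∈ A
    · simp only [Set.indicator_of_mem hw, abs_mul, abs_of_nonneg (hq.1 w)]
      exact mul_le_mul_of_nonneg_left (hclose A hA w hw) (hq.1 w)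
    · simp [hw]
  calc |∑ w, q w * f w - ∑ A ∈ 𝒜, fhat A * ∑ w, A.indicator q w|
      ≤ ∑ A ∈ 𝒜, ∑ w, A.indicator (fun w => q w * a) w := by
        rw [hsplit]
        refine (abs_sum_le_sum_abs _ _).trans (sum_le_sum fun A hA => ?_)
        exact (abs_sum_le_sum_abs _ _).trans (sum_le_sum fun w _ => hbound A hA w)
    _ = a := by
        rw [sum_sum_indicator_of_pairwiseDisjoint hdisj hcover, ← sum_mul, hq.2, one_mul]

theorem abs_sum_mul_sub_sum_mul_le_add {q f : Ω → ℝ} {fhat P : Set Ω → ℝ} {a : ℝ}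
    (h𝒜 : 𝒜.Nonempty) (hdisj : (𝒜 : Set (Set Ω)).PairwiseDisjoint id)
    (hcover : ⋃ A ∈ 𝒜, A = Set.univ) (hq : q ∈ stdSimplex ℝ Ω) (hP : ∑ A ∈ 𝒜, P A = 1)
    (hclose : ∀ A ∈ 𝒜, ∀ w ∈ A, |f w - fhat A| ≤ a) :
    |∑ w, q w * f w - ∑ A ∈ 𝒜, fhat A * P A|
      ≤ a + 𝒜.osc h𝒜 fhat * ∑ A ∈ 𝒜, |∑ w, A.indicator q w - P A| := by
  have hmass : ∑ A ∈ 𝒜, ∑ w, A.indicator q w = ∑ A ∈ 𝒜, P A := by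
    rw [sum_sum_indicator_of_pairwiseDisjoint hdisj hcover, hq.2, hP]
  have hdiscr := abs_sum_mul_sub_sum_mul_sum_indicator_le hdisj hcover hq hclose
  have htv := abs_sum_mul_sub_sum_mul_le 𝒜 hmass fun A hA => abs_sub_inf'_le_osc h𝒜 fhat hA
  calc _ ≤ |∑ w, q w * f w - ∑ A ∈ 𝒜, fhat A * ∑ w, A.indicator q w|
        + |∑ A ∈ 𝒜, fhat A * ∑ w, A.indicator q w - ∑ A ∈ 𝒜, fhat A * P A| := abs_sub_le _ _ _
    _ ≤ _ := add_le_add hdiscr htv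

theorem osc_sub_two_mul_le_osc [Nonempty Ω] {f : Ω → ℝ} {fhat : Set Ω → ℝ} {a : ℝ}
    (h𝒜 : 𝒜.Nonempty) (hcover : ⋃ A ∈ 𝒜, A = Set.univ)
    (hclose : ∀ A ∈ 𝒜, ∀ w ∈ A, |f w - fhat A| ≤ a) :
    univ.osc univ_nonempty f - 2 * a ≤ 𝒜.osc h𝒜 fhat := by
  have hcell : ∀ w, ∃ A ∈ 𝒜, w ∈ A := fun w => by
    have hw : w ∈ ⋃ A ∈ 𝒜, A := hcover ▸ Set.mem_univ w
    simpa using hw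
  obtain ⟨wM, -, hwM⟩ := exists_mem_eq_sup' univ_nonempty f
  obtain ⟨wm, -, hwm⟩ := exists_mem_eq_inf' univ_nonempty f
  obtain ⟨AM, hAM, hwAM⟩ := hcell wM
  obtain ⟨Am, hAm, hwAm⟩ := hcell wm
  have hM := (abs_le.1 (hclose AM hAM wM hwAM)).2
  have hm := (abs_le.1 (hclose Am hAm wm hwAm)).1
  have hAM_le := le_sup' fhat hAM
  have hAm_ge := inf'_le fhat hAm
  unfold osc
  linarith

section Decisions

variable [Nonempty Ω] {D : Type*} [Fintype D] [Nonempty D] {f : D → Ω → ℝ}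
  {fhat : D → Set Ω → ℝ} {ε : ℝ}

theorem one_sub_two_mul_sup'_osc_le (h𝒜 : 𝒜.Nonempty) (hcover : ⋃ A ∈ 𝒜, A = Set.univ)
    (hclose : ∀ d, ∀ A ∈ 𝒜, ∀ w ∈ A, |f d w - fhat d A| ≤ univ.osc univ_nonempty (f d) * ε) :
    (1 - 2 * ε) * univ.sup' univ_nonempty (fun d => univ.osc univ_nonempty (f d))
      ≤ univ.sup' univ_nonempty (fun d => 𝒜.osc h𝒜 (fhat d)) := by
  obtain ⟨d, -, hd⟩ := exists_mem_eq_sup' univ_nonempty fun d => univ.osc univ_nonempty (f d)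
  have hosc := osc_sub_two_mul_le_osc h𝒜 hcover (hclose d)
  have hosc_le := le_sup' (fun d => 𝒜.osc h𝒜 (fhat d)) (mem_univ d)
  rw [hd]
  linarith

theorem abs_sum_mul_sub_sum_mul_le_sup'_osc {q : Ω → ℝ} {P : Set Ω → ℝ} {δ : ℝ}
    (h𝒜 : 𝒜.Nonempty) (hdisj : (𝒜 : Set (Set Ω)).PairwiseDisjoint id)
    (hcover : ⋃ A ∈ 𝒜, A = Set.univ) (hε : 0 ≤ ε)
    (hclose : ∀ d, ∀ A ∈ 𝒜, ∀ w ∈ A, |f d w - fhat d A| ≤ univ.osc univ_nonempty (f d) * ε)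
    (hq : q ∈ stdSimplex ℝ Ω) (hP : ∑ A ∈ 𝒜, P A = 1)
    (hTV : ∑ A ∈ 𝒜, |∑ w, A.indicator q w - P A| ≤ δ) (d : D) :
    |∑ w, q w * f d w - ∑ A ∈ 𝒜, fhat d A * P A|
      ≤ univ.sup' univ_nonempty (fun d => univ.osc univ_nonempty (f d)) * ε
        + univ.sup' univ_nonempty (fun d => 𝒜.osc h𝒜 (fhat d)) * δ := by
  have hclose' : ∀ A ∈ 𝒜, ∀ w ∈ A, |f d w - fhat d A|
      ≤ univ.sup' univ_nonempty (fun d => univ.osc univ_nonempty (f d)) * ε := fun A hA w hw =>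
    (hclose d A hA w hw).trans
      (mul_le_mul_of_nonneg_right (le_sup' (fun d => univ.osc univ_nonempty (f d)) (mem_univ d)) hε)
  refine (abs_sum_mul_sub_sum_mul_le_add h𝒜 hdisj hcover hq hP hclose').trans
    (add_le_add_right ?_ _)
  have hosc := le_sup' (fun d => 𝒜.osc h𝒜 (fhat d)) (mem_univ d)
  exact mul_le_mul hosc hTV (sum_nonneg fun _ _ => abs_nonneg _) ((osc_nonneg h𝒜 _).trans hosc)

end Decisions

end Partition

theorem stmt_11_general {Ω : Type*} [Fintype Ω] [Nonempty Ω]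
    {D : Type*} [Fintype D] [Nonempty D]
    (𝒜 : Finset (Set Ω)) (h𝒜 : 𝒜.Nonempty)
    (hdisj : ∀ A ∈ 𝒜, ∀ B ∈ 𝒜, A ≠ B → Disjoint A B)
    (hcover : (⋃ A ∈ 𝒜, A) = Set.univ)
    (L : D → Ω → ℝ) (Lhat : D → Set Ω → ℝ)
    (ℳ : Set (Ω → ℝ))
    (hℳ : ∀ p ∈ ℳ, (∀ w, 0 ≤ p w) ∧ ∑ w, p w = 1)
    (ℳhat : Set (Set Ω → ℝ))
    (hℳhat : ∀ Phat ∈ ℳhat, (∀ A ∈ 𝒜, 0 ≤ Phat A) ∧ ∑ A ∈ 𝒜, Phat A = 1)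
    (ε δ : ℝ) (hε0 : 0 < ε) (hε2 : ε < 1 / 2)
    (hLsim : ∀ d : D, ∀ A ∈ 𝒜, ∀ w ∈ A,
      |(-L d w) - (-(Lhat d A))| ≤
        (Finset.univ.sup' Finset.univ_nonempty (fun w' : Ω => -L d w') -
          Finset.univ.inf' Finset.univ_nonempty (fun w' : Ω => -L d w')) * ε)
    (hMsim1 : ∀ p ∈ Set.extremePoints ℝ (closure (convexHull ℝ ℳ)),
      ∃ Phat ∈ ℳhat, ∑ A ∈ 𝒜, |(∑ w, Set.indicator A p w) - Phat A| ≤ δ)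
    (γ : ℝ) (hγ : 0 ≤ γ) :
    {d : D | ∀ e : D, ∃ p ∈ ℳ,
        (∑ w, p w * (-L e w)) - (∑ w, p w * (-L d w)) ≤
          γ * Finset.univ.sup' Finset.univ_nonempty
            (fun d' : D => Finset.univ.sup' Finset.univ_nonempty (fun w : Ω => -L d' w) -
              Finset.univ.inf' Finset.univ_nonempty (fun w : Ω => -L d' w))} ⊆
    ⋂ (η : ℝ) (_ : 0 < η),
      {d : D | ∀ e : D, ∃ Phat ∈ ℳhat,
          (∑ A ∈ 𝒜, (-(Lhat e A)) * Phat A) - (∑ A ∈ 𝒜, (-(Lhat d A)) * Phat A) ≤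
            (η + γ / (1 - 2 * ε) + 2 * (ε / (1 - 2 * ε) + δ)) *
              Finset.univ.sup' Finset.univ_nonempty
                (fun d' : D => 𝒜.sup' h𝒜 (fun A => -(Lhat d' A)) -
                  𝒜.inf' h𝒜 (fun A => -(Lhat d' A)))} := by
  intro d hd
  simp only [Set.mem_iInter, Set.mem_ofPred_eq]
  intro η hη e
  obtain ⟨p, hp, hpe⟩ := hd e
  obtain ⟨q, hq, hqp⟩ := exists_mem_extremePoints_sum_mul_le hℳ hp fun w => -L e w - -L d w
  simp only [mul_sub, sum_sub_distrib] at hqp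
  obtain ⟨P, hP, hTV⟩ := hMsim1 q hq
  have hRR := one_sub_two_mul_sup'_osc_le (f := fun d w => -L d w) (fhat := fun d A => -Lhat d A)
    h𝒜 hcover hLsim
  have hcmp := abs_sum_mul_sub_sum_mul_le_sup'_osc (f := fun d w => -L d w)
    (fhat := fun d A => -Lhat d A) h𝒜 hdisj hcover hε0.le hLsim
    (closure_convexHull_subset_stdSimplex hℳ (extremePoints_subset hq)) (hℳhat P hP).2 hTV
  have hcd := abs_le.1 (hcmp d)
  have hce := abs_le.1 (hcmp e)
  have hRh := le_sup'_of_le (fun d' => 𝒜.osc h𝒜 fun A => -Lhat d' A) (mem_univ d)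
    (osc_nonneg h𝒜 _)
  dsimp only [Finset.osc] at hRR hcd hce hRh
  set R := univ.sup' univ_nonempty fun d' : D =>
    univ.sup' univ_nonempty (fun w : Ω => -L d' w) - univ.inf' univ_nonempty (fun w : Ω => -L d' w)
  set Rh := univ.sup' univ_nonempty fun d' : D =>
    𝒜.sup' h𝒜 (fun A => -Lhat d' A) - 𝒜.inf' h𝒜 (fun A => -Lhat d' A)
  have h2ε : 0 < 1 - 2 * ε := by linarith
  have hscale : (γ + 2 * ε) * R ≤ (γ / (1 - 2 * ε) + 2 * (ε / (1 - 2 * ε))) * Rh :=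
    calc (γ + 2 * ε) * R = (γ + 2 * ε) / (1 - 2 * ε) * ((1 - 2 * ε) * R) := by field_simp
      _ ≤ (γ + 2 * ε) / (1 - 2 * ε) * Rh := by gcongr
      _ = _ := by ring
  exact ⟨P, hP, by linarith [mul_nonneg hη.le hRh]⟩

/-- Theorem 2, Eq. (12): if `L ∼_ε L̂` and
`ext(closure(cohull(ℳ))) ∼_δ ℳ̂`, then
`max^γ(Ω,D,ℳ,L) ⊆ ⋂_{η>0} max^{η + γ/(1−2ε) + 2(ε/(1−2ε)+δ)}(𝒜,D,ℳ̂,L̂)`. -/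
theorem stmt_11 {Ω : Type*} [Fintype Ω] [Nonempty Ω]
    {D : Type*} [Fintype D] [Nonempty D]
    (𝒜 : Finset (Set Ω)) (h𝒜 : 𝒜.Nonempty)
    (hne : ∀ A ∈ 𝒜, A.Nonempty)
    (hdisj : ∀ A ∈ 𝒜, ∀ B ∈ 𝒜, A ≠ B → Disjoint A B)
    (hcover : (⋃ A ∈ 𝒜, A) = Set.univ)
    (L : D → Ω → ℝ) (Lhat : D → Set Ω → ℝ)
    (hR : 0 < Finset.univ.sup' Finset.univ_nonempty
      (fun d : D => Finset.univ.sup' Finset.univ_nonempty (fun w : Ω => -L d w) -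
        Finset.univ.inf' Finset.univ_nonempty (fun w : Ω => -L d w)))
    (ℳ : Set (Ω → ℝ)) (hℳne : ℳ.Nonempty)
    (hℳ : ∀ p ∈ ℳ, (∀ w, 0 ≤ p w) ∧ ∑ w, p w = 1)
    (ℳhat : Set (Set Ω → ℝ)) (hℳhatne : ℳhat.Nonempty)
    (hℳhat : ∀ Phat ∈ ℳhat, (∀ A ∈ 𝒜, 0 ≤ Phat A) ∧ ∑ A ∈ 𝒜, Phat A = 1)
    (ε δ : ℝ) (hε0 : 0 < ε) (hε2 : ε < 1 / 2) (hδ : 0 ≤ δ)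
    (hLsim : ∀ d : D, ∀ A ∈ 𝒜, ∀ w ∈ A,
      |(-L d w) - (-(Lhat d A))| ≤
        (Finset.univ.sup' Finset.univ_nonempty (fun w' : Ω => -L d w') -
          Finset.univ.inf' Finset.univ_nonempty (fun w' : Ω => -L d w')) * ε)
    (hMsim1 : ∀ p ∈ Set.extremePoints ℝ (closure (convexHull ℝ ℳ)),
      ∃ Phat ∈ ℳhat, ∑ A ∈ 𝒜, |(∑ w, Set.indicator A p w) - Phat A| ≤ δ)
    (hMsim2 : ∀ Phat ∈ ℳhat,
      ∃ p ∈ Set.extremePoints ℝ (closure (convexHull ℝ ℳ)),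
        ∑ A ∈ 𝒜, |(∑ w, Set.indicator A p w) - Phat A| ≤ δ)
    (γ : ℝ) (hγ : 0 ≤ γ) :
    {d : D | ∀ e : D, ∃ p ∈ ℳ,
        (∑ w, p w * (-L e w)) - (∑ w, p w * (-L d w)) ≤
          γ * Finset.univ.sup' Finset.univ_nonempty
            (fun d' : D => Finset.univ.sup' Finset.univ_nonempty (fun w : Ω => -L d' w) -
              Finset.univ.inf' Finset.univ_nonempty (fun w : Ω => -L d' w))} ⊆
    ⋂ (η : ℝ) (_ : 0 < η),
      {d : D | ∀ e : D, ∃ Phat ∈ ℳhat,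
          (∑ A ∈ 𝒜, (-(Lhat e A)) * Phat A) - (∑ A ∈ 𝒜, (-(Lhat d A)) * Phat A) ≤
            (η + γ / (1 - 2 * ε) + 2 * (ε / (1 - 2 * ε) + δ)) *
              Finset.univ.sup' Finset.univ_nonempty
                (fun d' : D => 𝒜.sup' h𝒜 (fun A => -(Lhat d' A)) -
                  𝒜.inf' h𝒜 (fun A => -(Lhat d' A)))} :=
  stmt_11_general 𝒜 h𝒜 hdisj hcover L Lhat ℳ hℳ ℳhat hℳhat ε δ hε0 hε2 hLsim hMsim1 γ hγ
end
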